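/- arXiv:1503.00203 — 2 statements merged into one kernel-verified Lean document; each statement's English description precedes it below -/
import Mathlib

section
/- Let (X, m) be a measure space with 0 < m(X) < ∞, let ν ∈ [1, ∞), and let E ⊆ X be a measurable set with m(E) > 0. Let f ∈ L^ν(X, m) be a real-valued function with f = 0 m-almost everywhere on E, and let f̄ := (1/m(X)) ∫_X f dm denote its mean. Then ‖f‖_{L^ν(X,m)} ≤ (1 + (m(X)/m(E))^{1/ν}) · ‖f − f̄‖_{L^ν(X,m)}. -/
/-!
Write `f = (f - c) + c` for a constant `c`. Minkowski's inequality gives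
`‖f‖_p ≤ ‖f - c‖_p + |c| m(X)^{1/p}`, while `f - c = -c` on `E` gives
`|c| m(E)^{1/p} ≤ ‖f - c‖_p`. Eliminating `|c|` yields the bound for every constant `c`,
in particular for the mean of `f`.
-/

open MeasureTheory
open scoped ENNReal

namespace MeasureTheory

variable {α F : Type*} [MeasurableSpace α] [NormedAddCommGroup F] {μ : Measure α} {p : ℝ≥0∞}
  {s : Set α}

theorem enorm_mul_measure_rpow_le_eLpNorm_of_ae_restrict_eq {g : α → F} {c : F} (hp : p ≠ 0)
    (hs : μ s ≠ 0) (hg : ∀ᵐ x ∂μ.restrict s, g x = c) :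
    ‖c‖ₑ * μ s ^ (1 / p.toReal) ≤ eLpNorm g p μ :=
  calc ‖c‖ₑ * μ s ^ (1 / p.toReal) = eLpNorm (fun _ ↦ c) p (μ.restrict s) := by
        rw [eLpNorm_const c hp (by simpa using hs), Measure.restrict_apply_univ]
    _ = eLpNorm g p (μ.restrict s) := eLpNorm_congr_ae (hg.mono fun _ ↦ Eq.symm)
    _ ≤ eLpNorm g p μ := eLpNorm_restrict_le g p μ s

theorem eLpNorm_le_eLpNorm_sub_const_add {f : α → F} (hf : AEStronglyMeasurable f μ)
    (hp : 1 ≤ p) (c : F) :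
    eLpNorm f p μ ≤ eLpNorm (fun x ↦ f x - c) p μ + ‖c‖ₑ * μ Set.univ ^ (1 / p.toReal) := by
  have hp0 : p ≠ 0 := (one_pos.trans_le hp).ne'
  calc eLpNorm f p μ = eLpNorm ((fun x ↦ f x - c) + fun _ ↦ c) p μ := by
        congr 1; ext x; simp
    _ ≤ eLpNorm (fun x ↦ f x - c) p μ + eLpNorm (fun _ ↦ c) p μ :=
        eLpNorm_add_le (hf.sub aestronglyMeasurable_const) aestronglyMeasurable_const hp
    _ ≤ _ := by
        gcongr
        rcases eq_or_ne μ 0 with rfl | hμ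
        · simp
        · rw [eLpNorm_const c hp0 hμ]

theorem eLpNorm_le_mul_eLpNorm_sub_const_of_ae_restrict_eq_zero [IsFiniteMeasure μ]
    {f : α → F} (hf : AEStronglyMeasurable f μ) (hp : 1 ≤ p) (hs : μ s ≠ 0)
    (hfs : ∀ᵐ x ∂μ.restrict s, f x = 0) (c : F) :
    eLpNorm f p μ ≤
      (1 + (μ Set.univ / μ s) ^ (1 / p.toReal)) * eLpNorm (fun x ↦ f x - c) p μ := by
  set r := 1 / p.toReal
  have hp0 : p ≠ 0 := (one_pos.trans_le hp).ne'
  have hconst : ‖c‖ₑ * μ s ^ r ≤ eLpNorm (fun x ↦ f x - c) p μ := by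
    have hfc : ∀ᵐ x ∂μ.restrict s, f x - c = -c := by
      filter_upwards [hfs] with x hx
      simp [hx]
    simpa only [enorm_neg] using enorm_mul_measure_rpow_le_eLpNorm_of_ae_restrict_eq hp0 hs hfc
  have hscale : μ Set.univ ^ r = (μ Set.univ / μ s) ^ r * μ s ^ r := by
    rw [← ENNReal.mul_rpow_of_nonneg _ _ (by positivity),
      ENNReal.div_mul_cancel hs (measure_ne_top μ s)]
  calc eLpNorm f p μ ≤ eLpNorm (fun x ↦ f x - c) p μ + ‖c‖ₑ * μ Set.univ ^ r :=
        eLpNorm_le_eLpNorm_sub_const_add hf hp c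
    _ = eLpNorm (fun x ↦ f x - c) p μ + (μ Set.univ / μ s) ^ r * (‖c‖ₑ * μ s ^ r) := by
        rw [hscale]; ring
    _ ≤ eLpNorm (fun x ↦ f x - c) p μ +
          (μ Set.univ / μ s) ^ r * eLpNorm (fun x ↦ f x - c) p μ := by
        gcongr
    _ = _ := by ring

theorem integral_abs_rpow_rpow_one_div_eq_toReal_eLpNorm {f : α → ℝ} {ν : ℝ} (hν : 0 < ν)
    (hf : AEStronglyMeasurable f μ) :
    (∫ x, |f x| ^ ν ∂μ) ^ (1 / ν) = (eLpNorm f (ENNReal.ofReal ν) μ).toReal := by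
  rw [toReal_eLpNorm hf,
    lpNorm_eq_integral_norm_rpow_toReal (by simpa using hν) ENNReal.ofReal_ne_top hf]
  simp [ENNReal.toReal_ofReal hν.le, one_div]

end MeasureTheory

theorem stmt0_general {X : Type*} [MeasurableSpace X] (m : Measure X) (ν : ℝ) (hν : 1 ≤ ν)
    (hXfin : m Set.univ < ⊤)
    (E : Set X) (hE0 : 0 < m E)
    (f : X → ℝ) (hf : MemLp f (ENNReal.ofReal ν) m)
    (hfE : ∀ᵐ x ∂(m.restrict E), f x = 0) :
    (∫ x, |f x| ^ ν ∂m) ^ (1 / ν) ≤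
      (1 + ((m Set.univ).toReal / (m E).toReal) ^ (1 / ν)) *
        (∫ x, |f x - ((m Set.univ).toReal)⁻¹ * ∫ y, f y ∂m| ^ ν ∂m) ^ (1 / ν) := by
  have : IsFiniteMeasure m := ⟨hXfin⟩
  have hν0 : 0 < ν := one_pos.trans_le hν
  have hpν : (ENNReal.ofReal ν).toReal = ν := ENNReal.toReal_ofReal hν0.le
  set c := (m Set.univ).toReal⁻¹ * ∫ y, f y ∂m
  have hfc : MemLp (fun x ↦ f x - c) (ENNReal.ofReal ν) m := hf.sub (memLp_const c)
  have hK : (m Set.univ / m E) ^ (1 / ν) ≠ ⊤ :=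
    ENNReal.rpow_ne_top_of_nonneg (by positivity) (ENNReal.div_ne_top hXfin.ne hE0.ne')
  calc (∫ x, |f x| ^ ν ∂m) ^ (1 / ν) = (eLpNorm f (ENNReal.ofReal ν) m).toReal :=
        integral_abs_rpow_rpow_one_div_eq_toReal_eLpNorm hν0 hf.1
    _ ≤ ((1 + (m Set.univ / m E) ^ (1 / ν)) *
          eLpNorm (fun x ↦ f x - c) (ENNReal.ofReal ν) m).toReal := by
        refine ENNReal.toReal_mono (by finiteness) ?_
        simpa only [hpν] using eLpNorm_le_mul_eLpNorm_sub_const_of_ae_restrict_eq_zero hf.1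
          (ENNReal.one_le_ofReal.2 hν) hE0.ne' hfE c
    _ = _ := by
        rw [ENNReal.toReal_mul, ENNReal.toReal_add ENNReal.one_ne_top hK, ← ENNReal.toReal_rpow,
          ENNReal.toReal_div, ENNReal.toReal_one,
          integral_abs_rpow_rpow_one_div_eq_toReal_eLpNorm hν0 hfc.1]

/-- If `f ∈ L^ν(X,m)` vanishes a.e. on a set `E` of positive measure in a
finite measure space, then the `L^ν` norm of `f` is controlled by the `L^ν` norm of `f`
minus its mean, with constant `1 + (m(X)/m(E))^{1/ν}`. -/
theorem stmt0 {X : Type*} [MeasurableSpace X] (m : Measure X) (ν : ℝ) (hν : 1 ≤ ν)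
    (hX0 : 0 < m Set.univ) (hXfin : m Set.univ < ⊤)
    (E : Set X) (hE : MeasurableSet E) (hE0 : 0 < m E)
    (f : X → ℝ) (hf : MemLp f (ENNReal.ofReal ν) m)
    (hfE : ∀ᵐ x ∂(m.restrict E), f x = 0) :
    (∫ x, |f x| ^ ν ∂m) ^ (1 / ν) ≤
      (1 + ((m Set.univ).toReal / (m E).toReal) ^ (1 / ν)) *
        (∫ x, |f x - ((m Set.univ).toReal)⁻¹ * ∫ y, f y ∂m| ^ ν ∂m) ^ (1 / ν) :=
  stmt0_general m ν hν hXfin E hE0 f hf hfE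
end

section
/- Let N > 1 be a real number and let d ∈ (0, π]. Suppose λ > 0 and v : ℝ → ℝ is twice continuously differentiable on [−d/2, d/2], is not constant on [−d/2, d/2], satisfies v''(x) − (N−1)·tan(x)·v'(x) = −λ·v(x) for all x ∈ (−d/2, d/2), and satisfies the Neumann boundary conditions v'(−d/2) = v'(d/2) = 0. Then λ ≥ N/(1 − cos^N(d/2)). -/
/-!
Write `p = cos^(N-1)`, so that the equation reads `(p v')' = -λ p v`, and `c = cos^N (d/2)`.
The function `W = N sin · p v' - λ v (cos^N - c)` has derivative `v' (N cos^N - λ (cos^N - c))`,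
and the second factor is positive on `(-d/2, d/2)` as soon as `λ (1 - c) < N`. Suppose so and
let `v' > 0` on a maximal interval `(a, b)`. At `a` either `a = -d/2`, where `W = 0`, or
`v' a = 0` and `p v'` leaves `0` upwards, which forces `λ v a ≤ 0` and hence `W a ≥ 0`. The
symmetry `v ↦ -v(-·)` preserves the problem and turns `W` into `-W(-·)`, so likewise `W b ≤ 0`,
contradicting the strict increase of `W` on `[a, b]`. Hence `v' ≤ 0`, and `v' ≥ 0` by applying
this to `-v`, so `v` is constant.
-/

open Set Real

theorem exists_zero_pos_Ioc {g : ℝ → ℝ} {a b : ℝ} (hab : a ≤ b) (hg : ContinuousOn g (Icc a b))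
    (ha : g a ≤ 0) (hb : 0 < g b) : ∃ c ∈ Ico a b, g c = 0 ∧ ∀ x ∈ Ioc c b, 0 < g x := by
  set S := Icc a b ∩ g ⁻¹' {0}
  have hS : IsClosed S := hg.preimage_isClosed_of_isClosed isClosed_Icc isClosed_singleton
  have hne : S.Nonempty := intermediate_value_Icc hab hg ⟨ha, hb.le⟩
  have hbdd : BddAbove S := ⟨b, fun y hy => hy.1.2⟩
  obtain ⟨⟨hac, hcb⟩, hc0⟩ : sSup S ∈ S := hS.csSup_mem hne hbdd
  refine ⟨sSup S, ⟨hac, hcb.lt_of_ne ?_⟩, hc0, fun x hx => ?_⟩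
  · rintro hcb
    rw [hcb] at hc0
    exact hb.ne' hc0
  · by_contra! hx0
    obtain ⟨y, hy, hy0⟩ := intermediate_value_Icc hx.2
      (hg.mono (Icc_subset_Icc (hac.trans hx.1.le) le_rfl)) ⟨hx0, hb.le⟩
    have : y ≤ sSup S := le_csSup hbdd ⟨⟨by linarith [hx.1, hy.1], hy.2⟩, hy0⟩
    linarith [hx.1, hy.1]

theorem HasDerivWithinAt.nonneg_of_pos_right {f : ℝ → ℝ} {f' a b : ℝ}
    (hf : HasDerivWithinAt f f' (Ioi a) a) (hfa : f a = 0) (hab : a < b)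
    (hpos : ∀ x ∈ Ioo a b, 0 < f x) : 0 ≤ f' := by
  rw [hasDerivWithinAt_iff_tendsto_slope' self_notMem_Ioi] at hf
  refine ge_of_tendsto hf ?_
  filter_upwards [Ioo_mem_nhdsGT hab] with x hx
  rw [slope_def_field, hfa, sub_zero]
  exact div_nonneg (hpos x hx).le (sub_pos.2 hx.1).le

theorem cos_rpow_lt_cos_rpow_of_mem_Ioo {N r x : ℝ} (hN : 0 < N) (hr : r ≤ π / 2)
    (hx : x ∈ Ioo (-r) r) : cos r ^ N < cos x ^ N := by
  have hcos : cos r < cos x := by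
    rw [← cos_abs x]
    exact cos_lt_cos_of_nonneg_of_le_pi (abs_nonneg x) (by linarith [pi_pos]) (abs_lt.2 hx)
  exact rpow_lt_rpow (cos_nonneg_of_mem_Icc ⟨by linarith [abs_nonneg x, abs_lt.2 hx], hr⟩) hcos hN

theorem mul_sub_mul_sub_pos {N lam c t : ℝ} (hc : 0 ≤ c) (hct : c < t) (ht : t ≤ 1)
    (hlam : 0 ≤ lam) (hlt : lam * (1 - c) < N) : 0 < N * t - lam * (t - c) := by
  nlinarith [mul_nonneg hlam (sub_nonneg.2 ht)]

/-- `v'` stands for the derivative of `v`: a separate function, continuous up to `±r`, so that the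
Neumann conditions need no one-sided derivatives. -/
structure IsModelNeumannSolution (N lam r : ℝ) (v v' : ℝ → ℝ) : Prop where
  continuousOn : ContinuousOn v (Icc (-r) r)
  continuousOn_deriv : ContinuousOn v' (Icc (-r) r)
  hasDerivAt : ∀ x ∈ Ioo (-r) r, HasDerivAt v (v' x) x
  hasDerivAt_deriv : ∀ x ∈ Ioo (-r) r, HasDerivAt v' ((N - 1) * tan x * v' x - lam * v x) x
  deriv_neg_radius : v' (-r) = 0
  deriv_radius : v' r = 0

noncomputable def lyapunov (N lam r : ℝ) (v v' : ℝ → ℝ) (x : ℝ) : ℝ :=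
  N * sin x * (cos x ^ (N - 1) * v' x) - lam * v x * (cos x ^ N - cos r ^ N)

theorem lyapunov_reflect (N lam r : ℝ) (v v' : ℝ → ℝ) (x : ℝ) :
    lyapunov N lam r (fun x => -v (-x)) (fun x => v' (-x)) x = -lyapunov N lam r v v' (-x) := by
  simp only [lyapunov, sin_neg, cos_neg]
  ring

namespace IsModelNeumannSolution

variable {N lam r : ℝ} {v v' : ℝ → ℝ}

theorem of_contDiffOn (hr : 0 < r) (hv : ContDiffOn ℝ 2 v (Icc (-r) r))
    (hode : ∀ x ∈ Ioo (-r) r, deriv (deriv v) x - (N - 1) * tan x * deriv v x = -lam * v x)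
    (hbc₁ : derivWithin v (Icc (-r) r) (-r) = 0) (hbc₂ : derivWithin v (Icc (-r) r) r = 0) :
    IsModelNeumannSolution N lam r v (derivWithin v (Icc (-r) r)) := by
  have hv' : ContDiffOn ℝ 1 (derivWithin v (Icc (-r) r)) (Icc (-r) r) :=
    hv.derivWithin (uniqueDiffOn_Icc (by linarith)) (by norm_num)
  have hderiv : EqOn (derivWithin v (Icc (-r) r)) (deriv v) (Ioo (-r) r) := fun x hx =>
    derivWithin_of_mem_nhds (Icc_mem_nhds hx.1 hx.2)
  refine ⟨hv.continuousOn, hv'.continuousOn, fun x hx => ?_, fun x hx => ?_, hbc₁, hbc₂⟩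
  · rw [hderiv hx]
    exact ((hv.differentiableOn two_ne_zero).differentiableAt (Icc_mem_nhds hx.1 hx.2)).hasDerivAt
  · have h :=
      ((hv'.differentiableOn one_ne_zero).differentiableAt (Icc_mem_nhds hx.1 hx.2)).hasDerivAt
    rw [(hderiv.eventuallyEq_of_mem (isOpen_Ioo.mem_nhds hx)).deriv_eq] at h
    refine h.congr_deriv ?_
    rw [hderiv hx]
    linarith [hode x hx]

theorem neg (hs : IsModelNeumannSolution N lam r v v') :
    IsModelNeumannSolution N lam r (-v) (-v') := by
  refine ⟨hs.continuousOn.neg, hs.continuousOn_deriv.neg, fun x hx => (hs.hasDerivAt x hx).neg,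
    fun x hx => ?_, by simp [hs.deriv_neg_radius], by simp [hs.deriv_radius]⟩
  exact (hs.hasDerivAt_deriv x hx).neg.congr_deriv (by simp only [Pi.neg_apply]; ring)

theorem reflect (hs : IsModelNeumannSolution N lam r v v') :
    IsModelNeumannSolution N lam r (fun x => -v (-x)) (fun x => v' (-x)) := by
  have hmem : ∀ x ∈ Ioo (-r) r, -x ∈ Ioo (-r) r := fun x hx =>
    ⟨by linarith [hx.2], by linarith [hx.1]⟩
  have hmaps : MapsTo Neg.neg (Icc (-r) r) (Icc (-r) r) := fun x hx =>
    ⟨by linarith [hx.2], by linarith [hx.1]⟩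
  refine ⟨(hs.continuousOn.comp continuousOn_neg hmaps).neg,
    hs.continuousOn_deriv.comp continuousOn_neg hmaps, fun x hx => ?_, fun x hx => ?_,
    by simpa using hs.deriv_radius, by simpa using hs.deriv_neg_radius⟩
  · exact ((hs.hasDerivAt (-x) (hmem x hx)).comp x (hasDerivAt_neg x)).neg.congr_deriv (by ring)
  · refine ((hs.hasDerivAt_deriv (-x) (hmem x hx)).comp x (hasDerivAt_neg x)).congr_deriv ?_
    rw [tan_neg]
    ring

theorem hasDerivAt_cos_rpow_mul_deriv (hs : IsModelNeumannSolution N lam r v v') {x : ℝ}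
    (hx : x ∈ Ioo (-r) r) (hcos : 0 < cos x) :
    HasDerivAt (fun y => cos y ^ (N - 1) * v' y) (-(lam * (cos x ^ (N - 1) * v x))) x := by
  refine (((hasDerivAt_cos x).rpow_const (Or.inl hcos.ne')).mul
    (hs.hasDerivAt_deriv x hx)).congr_deriv ?_
  rw [rpow_sub_one hcos.ne' (N - 1), tan_eq_sin_div_cos]
  field_simp
  ring

theorem hasDerivAt_lyapunov (hs : IsModelNeumannSolution N lam r v v') {x : ℝ}
    (hx : x ∈ Ioo (-r) r) (hcos : 0 < cos x) :
    HasDerivAt (lyapunov N lam r v v')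
      (v' x * (N * cos x ^ N - lam * (cos x ^ N - cos r ^ N))) x := by
  have hw := ((hasDerivAt_cos x).rpow_const (p := N) (Or.inl hcos.ne')).sub_const (cos r ^ N)
  refine ((((hasDerivAt_sin x).const_mul N).mul (hs.hasDerivAt_cos_rpow_mul_deriv hx hcos)).sub
    (((hs.hasDerivAt x hx).const_mul lam).mul hw)).congr_deriv ?_
  have hp : cos x ^ (N - 1) * cos x = cos x ^ N := by
    rw [rpow_sub_one hcos.ne']
    field_simp
  linear_combination (N * v' x) * hp

theorem continuousOn_lyapunov (hs : IsModelNeumannSolution N lam r v v') (hN : 1 < N) :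
    ContinuousOn (lyapunov N lam r v v') (Icc (-r) r) := by
  have hp : ∀ p : ℝ, 0 < p → Continuous fun y => cos y ^ p := fun p hp =>
    continuous_cos.rpow_const fun _ => Or.inr hp.le
  exact ((continuous_const.mul continuous_sin).continuousOn.mul
    ((hp (N - 1) (by linarith)).continuousOn.mul hs.continuousOn_deriv)).sub
    ((continuousOn_const.mul hs.continuousOn).mul
      ((hp N (by linarith)).continuousOn.sub continuousOn_const))

theorem strictMonoOn_lyapunov (hs : IsModelNeumannSolution N lam r v v') (hN : 1 < N)
    (hr : r ≤ π / 2) (hlam : 0 ≤ lam) (hlt : lam * (1 - cos r ^ N) < N) {a b : ℝ}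
    (ha : -r ≤ a) (hb : b ≤ r) (hpos : ∀ x ∈ Ioo a b, 0 < v' x) :
    StrictMonoOn (lyapunov N lam r v v') (Icc a b) := by
  refine strictMonoOn_of_hasDerivWithinAt_pos (convex_Icc a b)
    (f' := fun x => v' x * (N * cos x ^ N - lam * (cos x ^ N - cos r ^ N)))
    ((hs.continuousOn_lyapunov hN).mono (Icc_subset_Icc ha hb)) (fun x hx => ?_) fun x hx => ?_
  all_goals
    rw [interior_Icc] at hx
    have hxr : x ∈ Ioo (-r) r := ⟨ha.trans_lt hx.1, hx.2.trans_le hb⟩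
    have hcos : 0 < cos x := cos_pos_of_mem_Ioo ⟨by linarith [hxr.1], by linarith [hxr.2]⟩
  · exact (hs.hasDerivAt_lyapunov hxr hcos).hasDerivWithinAt
  · refine mul_pos (hpos x hx) (mul_sub_mul_sub_pos ?_ ?_ ?_ hlam hlt)
    · exact rpow_nonneg (cos_nonneg_of_mem_Icc ⟨by linarith [hxr.1, hxr.2, pi_pos], hr⟩) N
    · exact cos_rpow_lt_cos_rpow_of_mem_Ioo (by linarith) hr hxr
    · exact rpow_le_one hcos.le (cos_le_one x) (by linarith)

theorem exists_lyapunov_nonneg_of_deriv_pos (hs : IsModelNeumannSolution N lam r v v')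
    (hN : 1 < N) (hr : r ≤ π / 2) {x₁ : ℝ} (hx₁ : x₁ ∈ Ioo (-r) r) (hpos : 0 < v' x₁) :
    ∃ a ∈ Ico (-r) x₁, (∀ x ∈ Ioc a x₁, 0 < v' x) ∧ 0 ≤ lyapunov N lam r v v' a := by
  obtain ⟨a, ha, hva, hposa⟩ := exists_zero_pos_Ioc hx₁.1.le
    (hs.continuousOn_deriv.mono (Icc_subset_Icc le_rfl hx₁.2.le)) hs.deriv_neg_radius.le hpos
  refine ⟨a, ha, hposa, ?_⟩
  suffices lam * v a * (cos a ^ N - cos r ^ N) ≤ 0 by simp [lyapunov, hva, this]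
  rcases ha.1.eq_or_lt with rfl | hra
  · simp [cos_neg]
  have har : a ∈ Ioo (-r) r := ⟨hra, ha.2.trans hx₁.2⟩
  have hcos : ∀ x ∈ Ioo a x₁, 0 < cos x := fun x hx =>
    cos_pos_of_mem_Ioo ⟨by linarith [hx.1], by linarith [hx.2, hx₁.2]⟩
  have hcosa : 0 < cos a := cos_pos_of_mem_Ioo ⟨by linarith, by linarith [har.2]⟩
  have hderiv :=
    (hs.hasDerivAt_cos_rpow_mul_deriv har hcosa).hasDerivWithinAt.nonneg_of_pos_right
      (by simp [hva]) ha.2 fun x hx =>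
        mul_pos (rpow_pos_of_pos (hcos x hx) _) (hposa x ⟨hx.1, hx.2.le⟩)
  have hlamv : lam * v a ≤ 0 := by
    have := rpow_pos_of_pos hcosa (N - 1)
    nlinarith
  exact mul_nonpos_of_nonpos_of_nonneg hlamv
    (sub_nonneg.2 (cos_rpow_lt_cos_rpow_of_mem_Ioo (by linarith) hr har).le)

theorem deriv_nonpos (hs : IsModelNeumannSolution N lam r v v') (hN : 1 < N) (hr : r ≤ π / 2)
    (hlam : 0 ≤ lam) (hlt : lam * (1 - cos r ^ N) < N) : ∀ x ∈ Ioo (-r) r, v' x ≤ 0 := by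
  intro x₁ hx₁
  by_contra! hpos
  obtain ⟨a, ha, hposa, hWa⟩ := hs.exists_lyapunov_nonneg_of_deriv_pos hN hr hx₁ hpos
  obtain ⟨b, hb, hposb, hWb⟩ := hs.reflect.exists_lyapunov_nonneg_of_deriv_pos hN hr
    (x₁ := -x₁) ⟨by linarith [hx₁.2], by linarith [hx₁.1]⟩ (by simpa using hpos)
  rw [lyapunov_reflect] at hWb
  have hab : a < -b := by linarith [ha.2, hb.2]
  have hposab : ∀ x ∈ Ioo a (-b), 0 < v' x := fun x hx => by
    rcases le_total x x₁ with hxx₁ | hx₁x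
    · exact hposa x ⟨hx.1, hxx₁⟩
    · simpa using hposb (-x) ⟨by linarith [hx.2], by linarith⟩
  have hmono := hs.strictMonoOn_lyapunov hN hr hlam hlt ha.1 (by linarith [hb.1]) hposab
  linarith [hmono (left_mem_Icc.2 hab.le) (right_mem_Icc.2 hab.le) hab]

end IsModelNeumannSolution

/-- The one-dimensional model eigenvalue bound: any positive `λ` admitting a
nonconstant Neumann solution of `v'' - (N-1) tan(x) v' = -λ v` on `(-d/2, d/2)` with
`0 < d ≤ π` satisfies `λ ≥ N / (1 - cos^N(d/2))`. -/
theorem stmt8 (N : ℝ) (hN : 1 < N) (d : ℝ) (hd : 0 < d) (hd' : d ≤ Real.pi)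
    (lam : ℝ) (hlam : 0 < lam) (v : ℝ → ℝ)
    (hv : ContDiffOn ℝ 2 v (Set.Icc (-(d / 2)) (d / 2)))
    (hnc : ¬ ∀ x ∈ Set.Icc (-(d / 2)) (d / 2), ∀ y ∈ Set.Icc (-(d / 2)) (d / 2), v x = v y)
    (hode : ∀ x ∈ Set.Ioo (-(d / 2)) (d / 2),
      deriv (deriv v) x - (N - 1) * Real.tan x * deriv v x = -lam * v x)
    (hbc₁ : derivWithin v (Set.Icc (-(d / 2)) (d / 2)) (-(d / 2)) = 0)
    (hbc₂ : derivWithin v (Set.Icc (-(d / 2)) (d / 2)) (d / 2) = 0) :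
    N / (1 - Real.cos (d / 2) ^ N) ≤ lam := by
  have hr : 0 < d / 2 := by linarith
  have hrπ : d / 2 ≤ π / 2 := by linarith
  have hc : cos (d / 2) ^ N < 1 := by
    simpa using cos_rpow_lt_cos_rpow_of_mem_Ioo (x := 0) (by linarith) hrπ ⟨by linarith, hr⟩
  rw [div_le_iff₀ (by linarith)]
  by_contra! hlt
  have hs := IsModelNeumannSolution.of_contDiffOn hr hv hode hbc₁ hbc₂
  have hzero : ∀ x ∈ Ico (-(d / 2)) (d / 2), derivWithin v (Icc (-(d / 2)) (d / 2)) x = 0 := by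
    rintro x ⟨hlx, hxr⟩
    rcases hlx.eq_or_lt with rfl | hlx
    · exact hbc₁
    · exact le_antisymm (hs.deriv_nonpos hN hrπ hlam.le hlt x ⟨hlx, hxr⟩)
        (neg_nonpos.1 (hs.neg.deriv_nonpos hN hrπ hlam.le hlt x ⟨hlx, hxr⟩))
  have hconst := constant_of_derivWithin_zero (hv.differentiableOn two_ne_zero) hzero
  exact hnc fun x hx y hy => (hconst x hx).trans (hconst y hy).symm
end
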